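/- Let L ≥ 1 and work in M_{2^L}(ℂ) ≅ M_2(ℂ)^{⊗L}. For each j let Z_j denote the Pauli matrix Z = diag(1, −1) acting on the j-th tensor factor, and set Z_tot = Σ_{j=1}^L Z_j. Then the linear span over all (a, b) ∈ ℂ² of the product matrices ∏_{j=1}^L (a·I + b·Z_j) equals the linear span of {Z_tot^m : 0 ≤ m ≤ L}. -/

import Mathlib

open Matrix

/-- The Pauli matrix `Z = diag(1, −1)`. -/
noncomputable def PauliZ : Matrix (Fin 2) (Fin 2) ℂ := !![1, 0; 0, -1]

/-- `Z_j = I^{⊗(j−1)} ⊗ Z ⊗ I^{⊗(L−j)}`: the Pauli matrix `Z` acting on the `j`-th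
tensor factor of `(ℂ²)^{⊗L}` and the identity on all other factors. -/
noncomputable def Zsite (L : ℕ) (j : Fin L) : Matrix (Fin L → Fin 2) (Fin L → Fin 2) ℂ :=
  fun x y => PauliZ (x j) (y j) * ∏ l ∈ Finset.univ.erase j, (if x l = y l then 1 else 0)

/-- `Z_tot = Σ_{j=1}^L Z_j`. -/
noncomputable def Ztot (L : ℕ) : Matrix (Fin L → Fin 2) (Fin L → Fin 2) ℂ :=
  ∑ j, Zsite L j

/-!
In the computational basis every `Z_j` is diagonal, so `∏ⱼ (a + b Z_j)` is the diagonal matrix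
with entry `(a + b)^(L - w) (a - b)^w` at a basis vector of Hamming weight `w`, and `Z_tot^m`
has entry `(L - 2w)^m` there. Both families thus lie in the `(L + 1)`-dimensional space of
diagonal matrices whose entries depend only on `w`, and each spans it: taking `a + b = 1`,
`a - b = t` gives the functions `w ↦ t^w`, the rows of a Vandermonde matrix with nodes
`0, …, L`, while the functions `w ↦ (L - 2w)^m`, `m ≤ L`, are the columns of a Vandermonde
matrix with the distinct nodes `L - 2w`.
-/

open Finset

@[to_additive]
theorem prod_comp_fin_two {ι M : Type*} [Fintype ι] [CommMonoid M] (f : Fin 2 → M)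
    (x : ι → Fin 2) :
    ∏ j, f (x j) = f 0 ^ (Fintype.card ι - hammingNorm x) * f 1 ^ hammingNorm x := by
  classical
  have hones : #{j | x j = 1} = hammingNorm x := by
    simp only [hammingNorm, show ∀ j, x j ≠ 0 ↔ x j = 1 by omega]
  have hzeros : #{j | x j = 0} = Fintype.card ι - hammingNorm x := by
    rw [← hones, ← card_univ, ← card_filter_add_card_filter_not (s := univ) (fun j => x j = 1)]
    simp only [show ∀ j, ¬x j = 1 ↔ x j = 0 by omega, Nat.add_sub_cancel_left]
  rw [← prod_fiberwise' univ x f, Fin.prod_univ_two, prod_const, prod_const, hzeros, hones]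

section Vandermonde

variable {K m : Type*} [Field K] [Fintype m] [DecidableEq m]

theorem Matrix.span_range_col_eq_top_of_isUnit {A : Matrix m m K} (hA : IsUnit A) :
    Submodule.span K (Set.range A.col) = ⊤ := by
  rw [← range_mulVecLin, LinearMap.range_eq_top]
  exact mulVec_surjective_iff_isUnit.2 hA

theorem Matrix.span_range_row_eq_top_of_isUnit {A : Matrix m m K} (hA : IsUnit A) :
    Submodule.span K (Set.range A.row) = ⊤ := by
  rw [← col_transpose]
  exact span_range_col_eq_top_of_isUnit ((isUnit_transpose A).2 hA)

theorem Matrix.isUnit_vandermonde {n : ℕ} {c : Fin n → K} (hc : Function.Injective c) :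
    IsUnit (vandermonde c) :=
  (isUnit_iff_isUnit_det _).2 (isUnit_iff_ne_zero.2 (det_vandermonde_ne_zero_iff.2 hc))

end Vandermonde

section WeightFunctions

variable {K : Type*} [Field K] [CharZero K] {n : ℕ}

theorem span_add_pow_mul_sub_pow_eq_top :
    Submodule.span K {c : Fin (n + 1) → K |
      ∃ a b : K, c = fun w : Fin (n + 1) => (a + b) ^ (n - (w : ℕ)) * (a - b) ^ (w : ℕ)} = ⊤ := by
  have hnodes : Function.Injective fun w : Fin (n + 1) => ((w : ℕ) : K) :=
    fun v w h => Fin.ext (Nat.cast_injective h)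
  refine eq_top_iff.2 ((span_range_row_eq_top_of_isUnit (isUnit_vandermonde hnodes)).ge.trans
    (Submodule.span_mono ?_))
  rintro _ ⟨v, rfl⟩
  -- `a + b = 1` and `a - b = v` turn the product into the power `v ^ w`
  refine ⟨(1 + v) / 2, (1 - v) / 2, funext fun w => ?_⟩
  rw [show (1 + (v : K)) / 2 + (1 - v) / 2 = 1 by ring,
    show (1 + (v : K)) / 2 - (1 - v) / 2 = v by ring, one_pow, one_mul]
  rfl

theorem span_image_sub_two_mul_pow_eq_top :
    Submodule.span K ((fun m : ℕ => fun w : Fin (n + 1) => ((n : K) - 2 * (w : ℕ)) ^ m) ''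
      {m | m ≤ n}) = ⊤ := by
  have hnodes : Function.Injective fun w : Fin (n + 1) => (n : K) - 2 * (w : ℕ) := by
    intro v w h
    exact Fin.ext (Nat.cast_injective (by linear_combination (-1 / 2 : K) * h))
  refine eq_top_iff.2 ((span_range_col_eq_top_of_isUnit (isUnit_vandermonde hnodes)).ge.trans
    (Submodule.span_mono ?_))
  rintro _ ⟨m, rfl⟩
  exact ⟨m, Nat.lt_succ_iff.1 m.isLt, rfl⟩

end WeightFunctions

def hammingWeight {L : ℕ} (x : Fin L → Fin 2) : Fin (L + 1) :=
  ⟨hammingNorm x, Nat.lt_succ_of_le (hammingNorm_le_card_fintype.trans_eq (Fintype.card_fin L))⟩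

noncomputable def weightDiagonal (L : ℕ) :
    (Fin (L + 1) → ℂ) →ₗ[ℂ] Matrix (Fin L → Fin 2) (Fin L → Fin 2) ℂ :=
  diagonalLinearMap _ ℂ ℂ ∘ₗ LinearMap.funLeft ℂ ℂ hammingWeight

theorem weightDiagonal_apply (L : ℕ) (c : Fin (L + 1) → ℂ) :
    weightDiagonal L c = diagonal fun x => c (hammingWeight x) :=
  rfl

theorem PauliZ_eq_diagonal : PauliZ = diagonal ![1, -1] := by
  ext u v
  fin_cases u <;> fin_cases v <;> rfl

theorem Zsite_eq_diagonal (L : ℕ) (j : Fin L) :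
    Zsite L j = diagonal fun x => ![1, -1] (x j) := by
  ext x y
  have hδ : ∏ l, (if x l = y l then (1 : ℂ) else 0) = if x = y then 1 else 0 := by
    simp [prod_boole, funext_iff]
  -- the factor `δ (x j) (y j)` of the diagonal `PauliZ` completes the product of the deltas
  rw [Zsite, PauliZ_eq_diagonal, diagonal_apply, diagonal_apply, ← mul_boole (x = y), ← hδ,
    ← mul_prod_erase univ _ (mem_univ j), ← mul_assoc, mul_boole]

theorem smul_one_add_smul_Zsite (L : ℕ) (j : Fin L) (a b : ℂ) :
    a • 1 + b • Zsite L j = diagonal fun x => ![a + b, a - b] (x j) := by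
  rw [Zsite_eq_diagonal, smul_one_eq_diagonal, ← diagonal_smul, diagonal_add]
  congr 1
  ext x
  rcases Fin.exists_fin_two.1 ⟨x j, rfl⟩ with h | h <;> simp [h, sub_eq_add_neg]

theorem list_prod_smul_one_add_smul_Zsite (L : ℕ) (a b : ℂ) :
    ((List.finRange L).map fun j => a • (1 : Matrix _ _ ℂ) + b • Zsite L j).prod =
      weightDiagonal L fun w => (a + b) ^ (L - (w : ℕ)) * (a - b) ^ (w : ℕ) := by
  have hdiag : ∀ l : List (Fin L), (l.map fun j => diagonal fun x => ![a + b, a - b] (x j)).prod =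
      diagonal (l.map fun j (x : Fin L → Fin 2) => ![a + b, a - b] (x j)).prod := fun l => by
    rw [← diagonalRingHom_apply, map_list_prod, List.map_map]
    rfl
  simp only [smul_one_add_smul_Zsite, hdiag, ← Fin.prod_univ_def, weightDiagonal_apply]
  congr 1
  ext x
  rw [Finset.prod_apply, prod_comp_fin_two (![a + b, a - b]) x, Fintype.card_fin]
  rfl

theorem Ztot_eq_weightDiagonal (L : ℕ) :
    Ztot L = weightDiagonal L fun w => (L : ℂ) - 2 * (w : ℕ) := by
  rw [Ztot, weightDiagonal_apply]
  simp only [Zsite_eq_diagonal, ← diagonalAddMonoidHom_apply, ← map_sum]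
  rw [diagonalAddMonoidHom_apply]
  congr 1
  ext x
  rw [Finset.sum_apply, sum_comp_fin_two (![1, -1]) x, nsmul_eq_mul, nsmul_eq_mul,
    Nat.cast_sub hammingNorm_le_card_fintype, Fintype.card_fin]
  simp only [Matrix.cons_val_zero, Matrix.cons_val_one, hammingWeight]
  ring

theorem Ztot_pow (L m : ℕ) :
    Ztot L ^ m = weightDiagonal L fun w => ((L : ℂ) - 2 * (w : ℕ)) ^ m := by
  rw [Ztot_eq_weightDiagonal, weightDiagonal_apply, weightDiagonal_apply, diagonal_pow]
  rfl

theorem stmt6_general {L : ℕ} :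
    Submodule.span ℂ {M : Matrix (Fin L → Fin 2) (Fin L → Fin 2) ℂ |
        ∃ a b : ℂ, M = ((List.finRange L).map (fun j =>
          a • (1 : Matrix (Fin L → Fin 2) (Fin L → Fin 2) ℂ) + b • Zsite L j)).prod}
      = Submodule.span ℂ ((fun m : ℕ => Ztot L ^ m) '' {m : ℕ | m ≤ L}) := by
  have hproducts : {M : Matrix (Fin L → Fin 2) (Fin L → Fin 2) ℂ |
        ∃ a b : ℂ, M = ((List.finRange L).map (fun j =>
          a • (1 : Matrix (Fin L → Fin 2) (Fin L → Fin 2) ℂ) + b • Zsite L j)).prod} =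
      weightDiagonal L '' {c | ∃ a b : ℂ,
        c = fun w : Fin (L + 1) => (a + b) ^ (L - (w : ℕ)) * (a - b) ^ (w : ℕ)} := by
    ext M
    simp only [list_prod_smul_one_add_smul_Zsite, Set.mem_ofPred_eq, Set.mem_image]
    constructor
    · rintro ⟨a, b, rfl⟩
      exact ⟨_, ⟨a, b, rfl⟩, rfl⟩
    · rintro ⟨_, ⟨a, b, rfl⟩, rfl⟩
      exact ⟨a, b, rfl⟩
  have hpowers : (fun m : ℕ => Ztot L ^ m) '' {m : ℕ | m ≤ L} = weightDiagonal L ''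
      ((fun m : ℕ => fun w : Fin (L + 1) => ((L : ℂ) - 2 * (w : ℕ)) ^ m) '' {m | m ≤ L}) := by
    rw [← Set.image_comp]
    exact Set.image_congr fun m _ => Ztot_pow L m
  rw [hproducts, hpowers, Submodule.span_image, Submodule.span_image,
    span_add_pow_mul_sub_pow_eq_top, span_image_sub_two_mul_pow_eq_top]

/-- For `L ≥ 1`, the span over all `(a, b) ∈ ℂ²` of the products `∏_{j=1}^L (a·I + b·Z_j)`
(the matrices `Z_j` commute pairwise, so the ordered product over `j = 1, …, L` is
unambiguous) equals the span of `{Z_tot^m : 0 ≤ m ≤ L}`. -/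
theorem stmt6 {L : ℕ} (hL : 1 ≤ L) :
    Submodule.span ℂ {M : Matrix (Fin L → Fin 2) (Fin L → Fin 2) ℂ |
        ∃ a b : ℂ, M = ((List.finRange L).map (fun j =>
          a • (1 : Matrix (Fin L → Fin 2) (Fin L → Fin 2) ℂ) + b • Zsite L j)).prod}
      = Submodule.span ℂ ((fun m : ℕ => Ztot L ^ m) '' {m : ℕ | m ≤ L}) :=
  stmt6_general
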